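/- arXiv:0708.2772 — 3 statements merged into one kernel-verified Lean document; each statement's English description precedes it below -/
import Mathlib

section
/- Let ∂ : W → W be the boundary map of the Basis II chain complex. Then ∂ ∘ ∂ = 0, the rank of ∂ equals 3, and the kernel of ∂ has dimension 5 over the field with two elements. -/
/-- The basis vectors `X, A, B, C, D, E, F, G` (in this order) of the 8-dimensional
vector space `W = (Fin 8 → ZMod 2)` over the field with two elements. -/
def e (i : Fin 8) : Fin 8 → ZMod 2 := Pi.single i 1

/-! In characteristic two, `∂A = ∂C` and `∂D = ∂G` make the boundaries `A + C` and `D + G` cycles,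
so `∂ ∘ ∂ = 0`. The image of `∂` is spanned by `B`, `A + C` and `D + G`, which are independent,
so `∂` has rank `3` and, by rank–nullity, nullity `5`. -/

theorem LinearMap.range_eq_span_range_comp_basis {ι R M N : Type*} [Semiring R]
    [AddCommMonoid M] [AddCommMonoid N] [Module R M] [Module R N]
    (b : Module.Basis ι R M) (f : M →ₗ[R] N) :
    range f = Submodule.span R (Set.range (f ∘ b)) := by
  rw [range_eq_map, ← b.span_eq, Submodule.map_span, Set.range_comp]

lemma linearIndependent_boundaries : LinearIndependent (ZMod 2) ![e 2, e 1 + e 3, e 4 + e 7] := by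
  rw [Fintype.linearIndependent_iff]
  decide

/-- The boundary map `∂` of the Basis II chain complex satisfies `∂ ∘ ∂ = 0`, has rank
`3`, and its kernel is `5`-dimensional over the field with two elements. -/
theorem stmt8 (D : (Fin 8 → ZMod 2) →ₗ[ZMod 2] (Fin 8 → ZMod 2))
    (hX : D (e 0) = 0)
    (hA : D (e 1) = e 2)
    (hB : D (e 2) = 0)
    (hC : D (e 3) = e 2)
    (hD : D (e 4) = e 1 + e 3)
    (hE : D (e 5) = 0)
    (hF : D (e 6) = e 4 + e 7)
    (hG : D (e 7) = e 1 + e 3)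
    :
    D ∘ₗ D = 0 ∧
    Module.finrank (ZMod 2) ↥(LinearMap.range D) = 3 ∧
    Module.finrank (ZMod 2) ↥(LinearMap.ker D) = 5 := by
  have hDD : D ∘ₗ D = 0 := by
    refine (Pi.basisFun (ZMod 2) (Fin 8)).ext fun i => ?_
    simp only [Pi.basisFun_apply, LinearMap.comp_apply, LinearMap.zero_apply]
    change D (D (e i)) = 0
    fin_cases i <;> simp [hX, hA, hB, hC, hD, hE, hF, hG, ZModModule.add_self]
  have hrange : LinearMap.range D =
      Submodule.span (ZMod 2) (Set.range ![e 2, e 1 + e 3, e 4 + e 7]) := by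
    have hbasis : ⇑D ∘ ⇑(Pi.basisFun (ZMod 2) (Fin 8)) = fun i => D (e i) := by
      funext i
      simp only [Function.comp_apply, Pi.basisFun_apply, e]
    rw [LinearMap.range_eq_span_range_comp_basis (Pi.basisFun (ZMod 2) (Fin 8)), hbasis]
    apply le_antisymm
    · refine Submodule.span_le.2 (Set.range_subset_iff.2 fun i => ?_)
      fin_cases i <;> simp [hX, hA, hB, hC, hD, hE, hF, hG, Submodule.mem_span_of_mem]
    · refine Submodule.span_le.2 (Set.range_subset_iff.2 fun i => ?_)
      fin_cases i
      exacts [Submodule.subset_span ⟨1, hA⟩, Submodule.subset_span ⟨4, hD⟩,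
        Submodule.subset_span ⟨6, hF⟩]
  have hrank : Module.finrank (ZMod 2) (LinearMap.range D) = 3 := by
    rw [hrange, finrank_span_eq_card linearIndependent_boundaries, Fintype.card_fin]
  refine ⟨hDD, hrank, ?_⟩
  have hrankNullity := D.finrank_range_add_finrank_ker
  rw [hrank, Module.finrank_fin_fun] at hrankNullity
  omega
end

section
/- For the Basis II chain complex (W, ∂), the image of ∂ is contained in the kernel of ∂, the quotient ker ∂ / im ∂ has dimension 2 over the field with two elements, and the classes of X and E in ker ∂ / im ∂ form a basis of this quotient; that is, the homology is ℤ₂ ⊕ ℤ₂ generated by [X] and [E]. -/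
open Module Submodule LinearMap

section Homology

variable {K V : Type*} [DivisionRing K] [AddCommGroup V] [Module K V]

abbrev LinearMap.homology (f : V →ₗ[K] V) : Type _ :=
  ker f ⧸ (range f).comap (ker f).subtype

theorem Submodule.finrank_quotient_comap_subtype_add_finrank [FiniteDimensional K V]
    {p q : Submodule K V} (hpq : p ≤ q) :
    finrank K (q ⧸ p.comap q.subtype) + finrank K p = finrank K q := by
  rw [← (comapSubtypeEquivOfLe hpq).finrank_eq, finrank_quotient_add_finrank]

theorem LinearMap.finrank_homology_add_two_mul_finrank_range [FiniteDimensional K V]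
    {f : V →ₗ[K] V} (hf : range f ≤ ker f) :
    finrank K f.homology + 2 * finrank K (range f) = finrank K V := by
  rw [← f.finrank_range_add_finrank_ker, ← finrank_quotient_comap_subtype_add_finrank hf]
  ring

theorem LinearMap.linearIndependent_homology_mk_pair {f : V →ₗ[K] V} {x y : ker f}
    {φ ψ : V →ₗ[K] K} (hφ : range f ≤ ker φ) (hψ : range f ≤ ker ψ)
    (hφx : φ x = 1) (hφy : φ y = 0) (hψy : ψ y = 1) :
    LinearIndependent K ![(Submodule.Quotient.mk x : f.homology), Submodule.Quotient.mk y] := by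
  refine LinearIndependent.pair_iff.mpr fun s t hst => ?_
  rw [← Submodule.Quotient.mk_smul, ← Submodule.Quotient.mk_smul, ← Submodule.Quotient.mk_add,
    Submodule.Quotient.mk_eq_zero, mem_comap] at hst
  have hs : s = 0 := by simpa [hφx, hφy] using hφ hst
  have ht : t = 0 := by simpa [hs, hψy] using hψ hst
  exact ⟨hs, ht⟩

theorem LinearIndependent.span_pair_eq_top {x y : V} (hxy : LinearIndependent K ![x, y])
    (hV : finrank K V = 2) : span K {x, y} = ⊤ := by
  have : FiniteDimensional K V := .of_finrank_pos (by omega)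
  rw [← Matrix.range_cons_cons_empty x y ![]]
  exact hxy.span_eq_top_of_card_eq_finrank' (by simp [hV])

end Homology

namespace BasisII

theorem basisFun_eq_e : ⇑(Pi.basisFun (ZMod 2) (Fin 8)) = e :=
  funext fun i => Pi.basisFun_apply (ZMod 2) (Fin 8) i

theorem e_apply (i j : Fin 8) : e i j = Pi.single (M := fun _ => ZMod 2) i 1 j := rfl

theorem ext_e {M : Type*} [AddCommMonoid M] [Module (ZMod 2) M]
    {f g : (Fin 8 → ZMod 2) →ₗ[ZMod 2] M} (h : ∀ i, f (e i) = g (e i)) : f = g :=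
  (Pi.basisFun (ZMod 2) (Fin 8)).ext fun i => by rw [basisFun_eq_e]; exact h i

noncomputable def differential : (Fin 8 → ZMod 2) →ₗ[ZMod 2] (Fin 8 → ZMod 2) :=
  (Pi.basisFun (ZMod 2) (Fin 8)).constr (ZMod 2)
    ![0, e 2, 0, e 2, e 1 + e 3, 0, e 4 + e 7, e 1 + e 3]

theorem differential_e (i : Fin 8) :
    differential (e i) = ![0, e 2, 0, e 2, e 1 + e 3, 0, e 4 + e 7, e 1 + e 3] i := by
  have h := (Pi.basisFun (ZMod 2) (Fin 8)).constr_basis (ZMod 2)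
    ![0, e 2, 0, e 2, e 1 + e 3, 0, e 4 + e 7, e 1 + e 3] i
  rwa [basisFun_eq_e] at h

theorem eq_differential {D : (Fin 8 → ZMod 2) →ₗ[ZMod 2] (Fin 8 → ZMod 2)}
    (hX : D (e 0) = 0) (hA : D (e 1) = e 2) (hB : D (e 2) = 0) (hC : D (e 3) = e 2)
    (hD : D (e 4) = e 1 + e 3) (hE : D (e 5) = 0) (hF : D (e 6) = e 4 + e 7)
    (hG : D (e 7) = e 1 + e 3) : D = differential :=
  ext_e fun i => by fin_cases i <;> simp [differential_e, *]

theorem range_differential_le_ker : range differential ≤ ker differential := by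
  refine range_le_ker_iff.mpr (ext_e fun i => ?_)
  fin_cases i <;> simp [differential_e, CharTwo.add_self_eq_zero]

theorem range_differential :
    range differential = span (ZMod 2) (Set.range ![e 2, e 1 + e 3, e 4 + e 7]) := by
  refine le_antisymm ?_ (span_le.mpr ?_)
  · rw [range_eq_map, ← (Pi.basisFun (ZMod 2) (Fin 8)).span_eq, Submodule.map_span,
      ← Set.range_comp, basisFun_eq_e, span_le]
    rintro _ ⟨i, rfl⟩
    fin_cases i <;> simp [differential_e, mem_span_of_mem]
  · rintro _ ⟨i, rfl⟩
    fin_cases i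
    exacts [⟨e 1, differential_e 1⟩, ⟨e 4, differential_e 4⟩, ⟨e 6, differential_e 6⟩]

theorem linearIndependent_boundaries :
    LinearIndependent (ZMod 2) ![e 2, e 1 + e 3, e 4 + e 7] := by
  rw [Fintype.linearIndependent_iff]
  intro g hg i
  have hcoord (j : Fin 8) := congrFun hg j
  fin_cases i
  · simpa [Fin.sum_univ_three, e_apply] using hcoord 2
  · simpa [Fin.sum_univ_three, e_apply] using hcoord 1
  · simpa [Fin.sum_univ_three, e_apply] using hcoord 4

theorem finrank_range_differential : finrank (ZMod 2) (range differential) = 3 := by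
  rw [range_differential, finrank_span_eq_card linearIndependent_boundaries, Fintype.card_fin]

theorem range_differential_le_ker_proj {i : Fin 8} (hi : i = 0 ∨ i = 5) :
    range differential ≤ ker (proj i) := by
  refine range_le_ker_iff.mpr (ext_e fun j => ?_)
  rcases hi with rfl | rfl <;> fin_cases j <;> simp [differential_e, e_apply]

end BasisII

open BasisII in
/-- For the Basis II chain complex `(W, ∂)`: `im ∂ ⊆ ker ∂`, the homology
`ker ∂ / im ∂` is 2-dimensional over `ZMod 2`, and the classes of `X` and `E` form a
basis of it; that is, the homology is `ℤ₂ ⊕ ℤ₂` generated by `[X]` and `[E]`. -/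
theorem stmt9 (D : (Fin 8 → ZMod 2) →ₗ[ZMod 2] (Fin 8 → ZMod 2))
    (hX : D (e 0) = 0)
    (hA : D (e 1) = e 2)
    (hB : D (e 2) = 0)
    (hC : D (e 3) = e 2)
    (hD : D (e 4) = e 1 + e 3)
    (hE : D (e 5) = 0)
    (hF : D (e 6) = e 4 + e 7)
    (hG : D (e 7) = e 1 + e 3)
    :
    LinearMap.range D ≤ LinearMap.ker D ∧
    Module.finrank (ZMod 2)
      (↥(LinearMap.ker D) ⧸
        Submodule.comap (LinearMap.ker D).subtype (LinearMap.range D)) = 2 ∧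
    ∀ (hx : e 0 ∈ LinearMap.ker D) (hy : e 5 ∈ LinearMap.ker D),
      LinearIndependent (ZMod 2)
        ![(Submodule.Quotient.mk (⟨e 0, hx⟩ : ↥(LinearMap.ker D)) :
            ↥(LinearMap.ker D) ⧸
              Submodule.comap (LinearMap.ker D).subtype (LinearMap.range D)),
          Submodule.Quotient.mk (⟨e 5, hy⟩ : ↥(LinearMap.ker D))] ∧
      Submodule.span (ZMod 2)
        {(Submodule.Quotient.mk (⟨e 0, hx⟩ : ↥(LinearMap.ker D)) :
            ↥(LinearMap.ker D) ⧸
              Submodule.comap (LinearMap.ker D).subtype (LinearMap.range D)),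
          Submodule.Quotient.mk (⟨e 5, hy⟩ : ↥(LinearMap.ker D))} = ⊤ := by
  obtain rfl := eq_differential hX hA hB hC hD hE hF hG
  have hH : finrank (ZMod 2) differential.homology = 2 := by
    have := finrank_homology_add_two_mul_finrank_range range_differential_le_ker
    rw [finrank_range_differential, finrank_fin_fun] at this
    omega
  refine ⟨range_differential_le_ker, hH, fun hx hy => ?_⟩
  have hXE := linearIndependent_homology_mk_pair (x := ⟨e 0, hx⟩) (y := ⟨e 5, hy⟩)
    (range_differential_le_ker_proj (.inl rfl)) (range_differential_le_ker_proj (.inr rfl))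
    (by simp [e_apply]) (by simp [e_apply]) (by simp [e_apply])
  exact ⟨hXE, hXE.span_pair_eq_top hH⟩
end

section
/- In the Basis II chain complex (W, ∂), the basis vector X lies in the kernel of ∂ but does not lie in the image of ∂; that is, the contact class [X] is a nonzero element of the homology ker ∂ / im ∂. -/
/-! `X` occurs in the boundary of no basis vector, so the `X`-coordinate, a linear form, vanishes
on `im ∂`; hence the cycle `X` is not a boundary and its class is nonzero. -/

theorem LinearMap.apply_coord_eq_zero_of_forall_single {ι R M : Type*} [Finite ι] [DecidableEq ι]
    [Semiring R] [AddCommMonoid M] [Module R M] (D : (ι → R) →ₗ[R] (ι → M)) (j : ι)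
    (h : ∀ i, D (Pi.single i 1) j = 0) (v : ι → R) : D v j = 0 := by
  have hproj : (LinearMap.proj j).comp D = 0 :=
    (Pi.basisFun R ι).ext fun i => by simpa using h i
  simpa using LinearMap.congr_fun hproj v

theorem LinearMap.single_notMem_range_of_forall_single {ι R : Type*} [Finite ι] [DecidableEq ι]
    [Semiring R] [Nontrivial R] (D : (ι → R) →ₗ[R] (ι → R)) (j : ι)
    (h : ∀ i, D (Pi.single i 1) j = 0) : Pi.single j 1 ∉ LinearMap.range D := by
  rintro ⟨v, hv⟩
  simpa [hv] using D.apply_coord_eq_zero_of_forall_single j h v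

theorem LinearMap.homologyClass_ne_zero {R M : Type*} [Ring R] [AddCommGroup M] [Module R M]
    {D : M →ₗ[R] M} {x : M} (hx : x ∈ LinearMap.ker D) (hxD : x ∉ LinearMap.range D) :
    (Submodule.Quotient.mk (⟨x, hx⟩ : ↥(LinearMap.ker D)) :
      ↥(LinearMap.ker D) ⧸ Submodule.comap (LinearMap.ker D).subtype (LinearMap.range D)) ≠ 0 :=
  fun h => hxD (by simpa [Submodule.Quotient.mk_eq_zero] using h)

/-- In the Basis II chain complex `(W, ∂)`, the basis vector `X` lies in `ker ∂` but
not in `im ∂`; equivalently, the contact class `[X]` is a nonzero element of the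
homology `ker ∂ / im ∂`. -/
theorem stmt10 (D : (Fin 8 → ZMod 2) →ₗ[ZMod 2] (Fin 8 → ZMod 2))
    (hX : D (e 0) = 0)
    (hA : D (e 1) = e 2)
    (hB : D (e 2) = 0)
    (hC : D (e 3) = e 2)
    (hD : D (e 4) = e 1 + e 3)
    (hE : D (e 5) = 0)
    (hF : D (e 6) = e 4 + e 7)
    (hG : D (e 7) = e 1 + e 3)
    :
    e 0 ∈ LinearMap.ker D ∧ e 0 ∉ LinearMap.range D ∧
    ∀ (h : e 0 ∈ LinearMap.ker D),
      (Submodule.Quotient.mk (⟨e 0, h⟩ : ↥(LinearMap.ker D)) :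
        ↥(LinearMap.ker D) ⧸
          Submodule.comap (LinearMap.ker D).subtype (LinearMap.range D)) ≠ 0 := by
  have hcoord : ∀ i, D (e i) 0 = 0 := by
    intro i
    fin_cases i <;>
      simp only [Fin.zero_eta, Fin.mk_one, Fin.reduceFinMk, hX, hA, hB, hC, hD, hE, hF, hG] <;>
      simp [e]
  have hnotMem : e 0 ∉ LinearMap.range D := D.single_notMem_range_of_forall_single 0 hcoord
  exact ⟨hX, hnotMem, fun h => LinearMap.homologyClass_ne_zero h hnotMem⟩
end
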